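/- arXiv:2202.04340 — 5 statements merged into one kernel-verified Lean document; each statement's English description precedes it below -/
import Mathlib

section
/- The unambiguous domain of the Cauchy product is associative: udom((f·g)·h) = udom(f·(g·h)), where udom(f·g) is defined as (udom(f)·udom(g)) minus the set of words uvw with v ≠ ε, u ∈ dom(f), uv ∈ dom(f), vw ∈ dom(g), and w ∈ dom(g). -/
/-- Elementwise concatenation of languages. -/
def setConcat {σ : Type*} (A B : Set (List σ)) : Set (List σ) :=
  {w | ∃ u ∈ A, ∃ v ∈ B, w = u ++ v}

/-- The set of ambiguously decomposable words `u v x` with `v ≠ ε`,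
`u, uv ∈ domF` and `vx, x ∈ domG`. -/
def ambig {σ : Type*} (domF domG : Set (List σ)) : Set (List σ) :=
  {w | ∃ u v x, w = u ++ v ++ x ∧ v ≠ [] ∧ u ∈ domF ∧ u ++ v ∈ domF ∧
        v ++ x ∈ domG ∧ x ∈ domG}

/-- Unambiguous domain of a Cauchy product:
`udom(f·g) = (udom f · udom g) \ ambiguous words`. -/
def udomProd {σ : Type*} (udomF udomG domF domG : Set (List σ)) : Set (List σ) :=
  setConcat udomF udomG \ ambig domF domG

section Aux

variable {σ : Type*}

/-- Reversal of a language. -/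
def revS (A : Set (List σ)) : Set (List σ) := List.reverse ⁻¹' A

lemma mem_revS {A : Set (List σ)} {w : List σ} : w ∈ revS A ↔ w.reverse ∈ A := Iff.rfl

lemma rev_mem_revS {A : Set (List σ)} {w : List σ} : w.reverse ∈ revS A ↔ w ∈ A := by
  simp [mem_revS]

lemma revS_concat (A B : Set (List σ)) :
    revS (setConcat A B) = setConcat (revS B) (revS A) := by
  ext w
  constructor
  · rintro ⟨u, hu, v, hv, h⟩
    rw [List.reverse_eq_iff] at h
    exact ⟨v.reverse, by simpa [mem_revS] using hv, u.reverse,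
      by simpa [mem_revS] using hu, by simpa using h⟩
  · rintro ⟨u, hu, v, hv, rfl⟩
    exact ⟨v.reverse, by simpa [mem_revS] using hv, u.reverse,
      by simpa [mem_revS] using hu, by simp⟩

lemma revS_ambig (A B : Set (List σ)) :
    revS (ambig A B) = ambig (revS B) (revS A) := by
  ext w
  constructor
  · rintro ⟨u, v, x, h, hv, hu, huv, hvx, hx⟩
    rw [List.reverse_eq_iff] at h
    refine ⟨x.reverse, v.reverse, u.reverse, by simpa using h, by simpa using hv,
      by simpa [mem_revS] using hx, ?_, ?_, by simpa [mem_revS] using hu⟩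
    · simpa [mem_revS] using hvx
    · simpa [mem_revS] using huv
  · rintro ⟨u, v, x, rfl, hv, hu, huv, hvx, hx⟩
    refine ⟨x.reverse, v.reverse, u.reverse, by simp, by simpa using hv,
      by simpa [mem_revS] using hx, by simpa [mem_revS] using hvx,
      by simpa [mem_revS] using huv, by simpa [mem_revS] using hu⟩

lemma revS_udomProd (A B dA dB : Set (List σ)) :
    revS (udomProd A B dA dB) = udomProd (revS B) (revS A) (revS dB) (revS dA) := by
  unfold udomProd
  rw [show revS (setConcat A B \ ambig dA dB) =
      revS (setConcat A B) \ revS (ambig dA dB) from rfl,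
    revS_concat, revS_ambig]

lemma revS_subset {A B : Set (List σ)} (h : revS A ⊆ revS B) : A ⊆ B := by
  intro w hw
  have := h (a := w.reverse) (by simpa [rev_mem_revS] using hw)
  simpa [rev_mem_revS] using this

lemma revS_mono {A B : Set (List σ)} (h : A ⊆ B) : revS A ⊆ revS B :=
  fun _ hw => h hw

lemma subset_dir (F G H dF dG dH : Set (List σ))
    (hF : F ⊆ dF) (hG : G ⊆ dG) (hH : H ⊆ dH) :
    udomProd (udomProd F G dF dG) H (setConcat dF dG) dH ⊆
      udomProd F (udomProd G H dG dH) dF (setConcat dG dH) := by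
  rintro w ⟨⟨p, ⟨⟨x, hx, y, hy, rfl⟩, hpnA⟩, z, hz, rfl⟩, hnA⟩
  constructor
  · refine ⟨x, hx, y ++ z, ⟨⟨y, hy, z, hz, rfl⟩, ?_⟩, by simp⟩
    rintro ⟨u, v, t, heq, hv, hu, huv, hvt, ht⟩
    exact hnA ⟨x ++ u, v, t, by simp [heq], hv,
      ⟨x, hF hx, u, hu, rfl⟩, ⟨x, hF hx, u ++ v, huv, by simp⟩, hvt, ht⟩
  · rintro ⟨u, v, t, heq, hv, hu, huv, hvt, ht⟩
    obtain ⟨t1, ht1, t2, ht2, rfl⟩ := ht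
    obtain ⟨s1, hs1, s2, hs2, hseq⟩ := hvt
    have heq2 : (x ++ y) ++ z = ((u ++ v) ++ t1) ++ t2 := by
      simpa [List.append_assoc] using heq
    rw [List.append_eq_append_iff] at heq2
    have main : x ++ y = (u ++ v) ++ t1 → z = t2 → False := by
      intro hxy hz2
      have hseq2 : (v ++ t1) ++ t2 = s1 ++ s2 := by
        simpa [List.append_assoc] using hseq
      rw [List.append_eq_append_iff] at hseq2
      rcases hseq2 with ⟨a, ha1, ha2⟩ | ⟨c, hc1, hc2⟩
      · rcases eq_or_ne a [] with rfl | hane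
        · simp only [List.append_nil] at ha1
          exact hpnA ⟨u, v, t1, by simpa [List.append_assoc] using hxy, hv, hu, huv,
            ha1 ▸ hs1, ht1⟩
        · refine hnA ⟨x ++ y, a, s2, ?_, hane, ⟨x, hF hx, y, hG hy, rfl⟩,
            ⟨u, hu, s1, hs1, ?_⟩, ?_, hs2⟩
          · rw [hz2, ha2]; simp [List.append_assoc]
          · rw [hxy, ha1]; simp [List.append_assoc]
          · rw [← ha2, ← hz2]; exact hH hz
      · rcases eq_or_ne c [] with rfl | hcne
        · simp only [List.append_nil] at hc1
          exact hpnA ⟨u, v, t1, by simpa [List.append_assoc] using hxy, hv, hu, huv,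
            hc1 ▸ hs1, ht1⟩
        · refine hnA ⟨u ++ s1, c, t2, ?_, hcne, ⟨u, hu, s1, hs1, rfl⟩,
            ⟨x, hF hx, y, hG hy, ?_⟩, ?_, ?_⟩
          · rw [hz2, hxy, List.append_assoc u v t1, hc1]; simp [List.append_assoc]
          · rw [hxy]; simp [List.append_assoc, hc1]
          · rw [← hc2]; exact hs2
          · rw [← hz2]; exact hH hz
    rcases heq2 with ⟨a, ha1, ha2⟩ | ⟨c, hc1, hc2⟩
    · rcases eq_or_ne a [] with rfl | hane
      · simp only [List.append_nil] at ha1 ha2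
        exact main ha1.symm ha2
      · refine hnA ⟨x ++ y, a, t2, ?_, hane, ⟨x, hF hx, y, hG hy, rfl⟩,
          ⟨u ++ v, huv, t1, ht1, ?_⟩, ?_, ht2⟩
        · rw [ha2]; simp [List.append_assoc]
        · rw [← ha1]
        · rw [← ha2]; exact hH hz
    · rcases eq_or_ne c [] with rfl | hcne
      · simp only [List.append_nil] at hc1 hc2
        exact main hc1 hc2.symm
      · refine hnA ⟨(u ++ v) ++ t1, c, z, ?_, hcne, ⟨u ++ v, huv, t1, ht1, rfl⟩,
          ⟨x, hF hx, y, hG hy, hc1.symm⟩, ?_, hH hz⟩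
        · rw [hc1]
        · rw [← hc2]; exact ht2
end Aux

theorem udomProd_assoc {σ : Type*}
    (udomF udomG udomH domF domG domH : Set (List σ))
    (hF : udomF ⊆ domF) (hG : udomG ⊆ domG) (hH : udomH ⊆ domH) :
    udomProd (udomProd udomF udomG domF domG) udomH (setConcat domF domG) domH =
      udomProd udomF (udomProd udomG udomH domG domH) domF (setConcat domG domH) := by
  apply Set.Subset.antisymm
  · exact subset_dir _ _ _ _ _ _ hF hG hH
  · apply revS_subset
    rw [revS_udomProd, revS_udomProd, revS_udomProd, revS_udomProd, revS_concat, revS_concat]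
    exact subset_dir _ _ _ _ _ _ (revS_mono hH) (revS_mono hG) (revS_mono hF)
end

section
/- Let f(w) = { c^{|w|_a} } and g(w) = { c^{|w|_b} } for w ∈ {a,b}*, where |w|_a counts occurrences of a. Define the sum h = f + g by h(w) = f(w) ∪ g(w). Then the functional domain { w | |h(w)| = 1 } equals the set of words with equal numbers of a's and b's, which is not a regular language. -/
open List

/-- `f(w) = { c^{|w|_a} }`, with `a = true`, `c = ()`. -/
def fRel (w : List Bool) : Set (List Unit) := {List.replicate (w.count true) ()}

/-- `g(w) = { c^{|w|_b} }`, with `b = false`. -/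
def gRel (w : List Bool) : Set (List Unit) := {List.replicate (w.count false) ()}

/-- The sum `h = f + g`: `h(w) = f(w) ∪ g(w)`. -/
def hRel (w : List Bool) : Set (List Unit) := fRel w ∪ gRel w

theorem fdom_sum_not_regular :
    {w : List Bool | ∃ x, hRel w = {x}} = {w : List Bool | w.count true = w.count false} ∧
    ¬ Language.IsRegular ({w : List Bool | w.count true = w.count false} : Language Bool) := by
  constructor
  · ext w
    simp only [Set.mem_setOf_eq]
    constructor
    · rintro ⟨x, hx⟩
      have h1 : List.replicate (w.count true) () ∈ hRel w := Or.inl rfl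
      have h2 : List.replicate (w.count false) () ∈ hRel w := Or.inr rfl
      rw [hx, Set.mem_singleton_iff] at h1 h2
      have := h1.trans h2.symm
      simpa using congrArg List.length this
    · intro h
      exact ⟨List.replicate (w.count true) (), by
        simp [hRel, fRel, gRel, h, Set.union_self]⟩
  · rintro ⟨σ, hσ, M, hM⟩
    set n := Fintype.card σ with hn
    set x : List Bool := List.replicate n true ++ List.replicate n false with hxdef
    have hxmem : x ∈ M.accepts := by
      rw [hM]
      show (replicate n true ++ replicate n false).count true = _
      simp [hxdef, List.count_replicate]
    have hlen : n ≤ x.length := by simp [hxdef]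
    obtain ⟨a, b, c, hsplit, hle, hbne, hpump⟩ := M.pumping_lemma hxmem hlen
    -- b consists only of trues
    have htake : (a ++ b) = x.take (a.length + b.length) := by
      rw [hsplit]; simp [List.take_append]
    have hfab : (a ++ b).count false = 0 := by
      rw [htake, hxdef, List.take_append_of_le_length (by simpa using hle)]
      simp [List.take_replicate, List.count_replicate]
    have hfb : b.count false = 0 := by
      simp [List.count_append] at hfab; omega
    have htb : b.count true = b.length := by
      have := b.count_true_add_count_false
      omega
    have hbpos : 0 < b.length := List.length_pos_iff.mpr hbne
    -- the pumped word
    have hy : a ++ (b ++ b) ++ c ∈ M.accepts := by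
      apply hpump
      refine Language.mem_mul.mpr ⟨a ++ (b ++ b), Language.mem_mul.mpr
        ⟨a, rfl, b ++ b, ?_, rfl⟩, c, rfl, by simp⟩
      exact Language.mem_kstar.mpr ⟨[b, b], by simp, by intro y hy; simp at hy; subst hy; rfl⟩
    rw [hM] at hy
    have hxt : x.count true = n := by simp [hxdef, List.count_replicate]
    have hxf : x.count false = n := by simp [hxdef, List.count_replicate]
    rw [hsplit] at hxt hxf
    simp only [List.count_append] at hxt hxf
    have : (a ++ (b ++ b) ++ c).count true = (a ++ (b ++ b) ++ c).count false := hy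
    simp only [List.count_append] at this
    omega
end

section
/- If w belongs to the unambiguous domain udom(h) of an RTE h, then the relational semantics value set ⟦h⟧(w) is a singleton; and w ∈ dom(h) if and only if ⟦h⟧(w) is nonempty. (It suffices to prove this for the fragment with basic expressions, sum, Cauchy product and Kleene star, by structural induction.) -/
/-- Regular transducer expressions over the fragment with basic expressions,
sum, Cauchy product and Kleene star.  The base combinator is given by an
arbitrary (regular) language `L` together with a constant output `v`. -/
inductive RTE (σ γ : Type*) where
  | base (L : Set (List σ)) (v : List γ)
  | sum (f g : RTE σ γ)
  | prod (f g : RTE σ γ)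
  | star (f : RTE σ γ)

namespace RTE

variable {σ γ : Type*}

/-- Elementwise concatenation of sets of words. -/
def setConcat (A B : Set (List γ)) : Set (List γ) :=
  {w | ∃ u ∈ A, ∃ v ∈ B, w = u ++ v}

/-- Relational semantics `⟦h⟧ : Σ* → 2^{Γ*}`. -/
def sem : RTE σ γ → List σ → Set (List γ)
  | base L v, w => {x | w ∈ L ∧ x = v}
  | sum f g, w => sem f w ∪ sem g w
  | prod f g, w => {x | ∃ u v, w = u ++ v ∧ x ∈ setConcat (sem f u) (sem g v)}
  | star f, w => {x | ∃ us : List (List σ), us.flatten = w ∧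
      ∃ xs : List (List γ), xs.flatten = x ∧ List.Forall₂ (fun u y => y ∈ sem f u) us xs}

/-- Domain of an expression. -/
def dom : RTE σ γ → Set (List σ)
  | base L _ => L
  | sum f g => dom f ∪ dom g
  | prod f g => {w | ∃ u ∈ dom f, ∃ v ∈ dom g, w = u ++ v}
  | star f => {w | ∃ us : List (List σ), us.flatten = w ∧ ∀ u ∈ us, u ∈ dom f}

/-- Unambiguous domain of an expression. -/
def udom : RTE σ γ → Set (List σ)
  | base L _ => L
  | sum f g => (udom f \ dom g) ∪ (udom g \ dom f)
  | prod f g => {w | ∃ u v, w = u ++ v ∧ u ∈ udom f ∧ v ∈ udom g ∧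
      ∀ u' v', w = u' ++ v' → u' ∈ dom f → v' ∈ dom g → u' = u ∧ v' = v}
  | star f => {w | ∃ us : List (List σ), us.flatten = w ∧ (∀ u ∈ us, u ∈ udom f) ∧
      ∀ us' : List (List σ), us'.flatten = w → (∀ u ∈ us', u ∈ dom f) → us' = us}

end RTE

theorem my_forall₂_exists {α β : Type*} {R : α → β → Prop} :
    ∀ us : List α, (∀ u ∈ us, ∃ x, R u x) → ∃ xs, List.Forall₂ R us xs
  | [], _ => ⟨[], List.Forall₂.nil⟩
  | u :: us, h => by
    obtain ⟨x, hx⟩ := h u (by simp)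
    obtain ⟨xs, hxs⟩ := my_forall₂_exists us (fun u hu => h u (by simp [hu]))
    exact ⟨x :: xs, List.Forall₂.cons hx hxs⟩

theorem my_forall₂_mem {α β : Type*} {R : α → β → Prop}
    {us : List α} {xs : List β} (h : List.Forall₂ R us xs) :
    ∀ u ∈ us, ∃ x, R u x := by
  induction h with
  | nil => simp
  | cons hr _ ih =>
    intro u hu
    rcases List.mem_cons.mp hu with rfl | hu
    · exact ⟨_, hr⟩
    · exact ih u hu

theorem my_forall₂_unique {α β : Type*} {R S : α → β → Prop}
    (hRS : ∀ u x y, R u x → S u y → x = y) :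
    ∀ {us : List α} {xs ys : List β}, List.Forall₂ R us xs → List.Forall₂ S us ys → xs = ys := by
  intro us xs ys h
  induction h generalizing ys with
  | nil => intro h2; cases h2; rfl
  | cons hr _ ih =>
    intro h2
    cases h2 with
    | cons hs h2' => rw [hRS _ _ _ hr hs, ih h2']

theorem rte_aux {σ γ : Type*} (h : RTE σ γ) (w : List σ) :
    (w ∈ RTE.dom h ↔ (RTE.sem h w).Nonempty) ∧
    (w ∈ RTE.udom h → ∃ x, RTE.sem h w = {x}) := by
  induction h generalizing w with
  | base L v =>
    constructor
    · constructor
      · intro hw; exact ⟨v, hw, rfl⟩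
      · rintro ⟨x, hw, rfl⟩; exact hw
    · intro hw
      exact ⟨v, Set.eq_singleton_iff_unique_mem.mpr ⟨⟨hw, rfl⟩, fun x hx => hx.2⟩⟩
  | sum f g ihf ihg =>
    constructor
    · show w ∈ RTE.dom f ∪ RTE.dom g ↔ (RTE.sem f w ∪ RTE.sem g w).Nonempty
      rw [Set.union_nonempty, Set.mem_union]
      exact or_congr (ihf w).1 (ihg w).1
    · rintro (⟨hu, hnd⟩ | ⟨hu, hnd⟩)
      · obtain ⟨x, hx⟩ := (ihf w).2 hu
        refine ⟨x, ?_⟩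
        have hg : RTE.sem g w = ∅ := by
          rw [← Set.not_nonempty_iff_eq_empty]
          exact fun hn => hnd ((ihg w).1.mpr hn)
        show RTE.sem f w ∪ RTE.sem g w = {x}
        rw [hx, hg, Set.union_empty]
      · obtain ⟨x, hx⟩ := (ihg w).2 hu
        refine ⟨x, ?_⟩
        have hf : RTE.sem f w = ∅ := by
          rw [← Set.not_nonempty_iff_eq_empty]
          exact fun hn => hnd ((ihf w).1.mpr hn)
        show RTE.sem f w ∪ RTE.sem g w = {x}
        rw [hx, hf, Set.empty_union]
  | prod f g ihf ihg =>
    constructor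
    · constructor
      · rintro ⟨u, hu, v, hv, rfl⟩
        obtain ⟨a, ha⟩ := (ihf u).1.mp hu
        obtain ⟨b, hb⟩ := (ihg v).1.mp hv
        exact ⟨a ++ b, u, v, rfl, a, ha, b, hb, rfl⟩
      · rintro ⟨x, u, v, hw, a, ha, b, hb, rfl⟩
        exact ⟨u, (ihf u).1.mpr ⟨a, ha⟩, v, (ihg v).1.mpr ⟨b, hb⟩, hw⟩
    · rintro ⟨u, v, rfl, huf, hvg, huniq⟩
      obtain ⟨a, ha⟩ := (ihf u).2 huf
      obtain ⟨b, hb⟩ := (ihg v).2 hvg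
      refine ⟨a ++ b, Set.eq_singleton_iff_unique_mem.mpr ⟨⟨u, v, rfl, a, by rw [ha]; rfl, b, by rw [hb]; rfl, rfl⟩, ?_⟩⟩
      rintro x ⟨u', v', hw', a', ha', b', hb', rfl⟩
      obtain ⟨hu', hv'⟩ := huniq u' v' hw' ((ihf u').1.mpr ⟨a', ha'⟩) ((ihg v').1.mpr ⟨b', hb'⟩)
      subst hu'; subst hv'
      rw [ha] at ha'; rw [hb] at hb'
      rw [Set.mem_singleton_iff] at ha' hb'
      rw [ha', hb']
  | star f ihf =>
    constructor
    · constructor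
      · rintro ⟨us, rfl, hdom⟩
        obtain ⟨xs, hxs⟩ := my_forall₂_exists (R := fun u y => y ∈ RTE.sem f u) us
          (fun u hu => (ihf u).1.mp (hdom u hu))
        exact ⟨xs.flatten, us, rfl, xs, rfl, hxs⟩
      · rintro ⟨x, us, hflat, xs, hx, hxs⟩
        exact ⟨us, hflat, fun u hu => (ihf u).1.mpr (my_forall₂_mem hxs u hu)⟩
    · rintro ⟨us, rfl, hud, huniq⟩
      obtain ⟨xs, hxs⟩ := my_forall₂_exists (R := fun u x => RTE.sem f u = {x}) us
        (fun u hu => (ihf u).2 (hud u hu))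
      refine ⟨xs.flatten, Set.eq_singleton_iff_unique_mem.mpr ⟨⟨us, rfl, xs, rfl,
        hxs.imp (fun _ _ hr => by rw [hr]; rfl)⟩, ?_⟩⟩
      rintro x ⟨us', hflat', xs', rfl, hmem⟩
      have hus : us' = us :=
        huniq us' hflat' (fun u hu => (ihf u).1.mpr (my_forall₂_mem hmem u hu))
      subst hus
      have : xs' = xs := my_forall₂_unique
        (fun u x y hR hS => by rw [hS, Set.mem_singleton_iff] at hR; exact hR) hmem hxs
      rw [this]

theorem rte_dom_udom_sem {σ γ : Type*} (h : RTE σ γ) (w : List σ) :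
    (w ∈ RTE.dom h ↔ RTE.sem h w ≠ ∅) ∧
    (w ∈ RTE.udom h → ∃ x, RTE.sem h w = {x}) := by
  refine ⟨?_, (rte_aux h w).2⟩
  rw [← Set.nonempty_iff_ne_empty]
  exact (rte_aux h w).1
end

section
/- For Σ = {1,...,n}, with Σ_{<i} = {1,...,i−1} and Σ_{>i} = {i+1,...,n}, define L_i = (Σ_{<i}* · i · Σ_{<i}* · Σ_{>i})* for 1 ≤ i < n, and L_n = Σ_{<n}* · n · Σ_{<n}* · n. With u_i defined by u_1 = 1, u_i = u_{i-1} i u_{i-1} for 2 ≤ i < n, u_n = u_{n-1} n u_{n-1} n, we have ⋂_{i=1}^n L_i = { u_n }. -/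
/-- The inner words: `u 1 = [1]`, `u (i+1) = u i ++ [i+1] ++ u i`. -/
def uword : ℕ → List ℕ
  | 0 => []
  | 1 => [1]
  | (i + 2) => uword (i + 1) ++ [i + 2] ++ uword (i + 1)

/-- `u_n = u_{n-1} · n · u_{n-1} · n`. -/
def ufinal (n : ℕ) : List ℕ := uword (n - 1) ++ [n] ++ uword (n - 1) ++ [n]

/-- `w` only uses letters from `Σ_{<i} = {1, …, i-1}`. -/
def overLow (i : ℕ) (w : List ℕ) : Prop := ∀ x ∈ w, 1 ≤ x ∧ x < i

/-- The block language `Σ_{<i}* · i · Σ_{<i}* · Σ_{>i}` (letters `> i` bounded by `n`). -/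
def block (n i : ℕ) : Set (List ℕ) :=
  {w | ∃ p q y, w = p ++ [i] ++ q ++ [y] ∧ overLow i p ∧ overLow i q ∧ i < y ∧ y ≤ n}

/-- `L_i = (Σ_{<i}* i Σ_{<i}* Σ_{>i})*` for `i < n`, and
`L_n = Σ_{<n}* n Σ_{<n}* n`. -/
def Llang (n i : ℕ) : Set (List ℕ) :=
  if i = n then
    {w | ∃ p q, w = p ++ [n] ++ q ++ [n] ∧ overLow n p ∧ overLow n q}
  else
    {w | ∃ us : List (List ℕ), us.flatten = w ∧ ∀ u ∈ us, u ∈ block n i}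

/-!
A word of the block language `Σ_{<i}* i Σ_{<i}* Σ_{>i}` ends at its only letter `> i`, so the
blocks of a word of `L_i` are found by cutting after each letter `> i`. Hence a word `p n q n` of
`L_n` lies in every `L_i`, `i < n`, exactly when `p n` and `q n` do. By induction on `k`: if `v` is
over `{1, …, k}`, `y > k` and `v y ∈ L_i` for all `i ≤ k`, then `L_k` forces `v = p k q` with
`p, q` over `Σ_{<k}`; cutting after `k` puts `p k` and `q y` in every `L_i`, `i < k`, so
`p = q = u_{k-1}` and `v = u_k`. Conversely `u_k y = (u_{k-1} k)(u_{k-1} y)` lies in `L_i` for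
`i ≤ k < y` by the same recursion.
-/

open Computability

theorem List.append_cons_inj_of_forall_not {α : Type*} {P : α → Prop} {v v' s s' : List α}
    {y z : α} (hv : ∀ x ∈ v, ¬P x) (hv' : ∀ x ∈ v', ¬P x) (hy : P y) (hz : P z)
    (h : v ++ y :: s = v' ++ z :: s') : v = v' ∧ y = z ∧ s = s' := by
  induction v generalizing v' with
  | nil => cases v' <;> simp_all
  | cons a v ih =>
    cases v' with
    | nil => exact (hv a List.mem_cons_self ((List.cons.inj h).1 ▸ hz)).elim
    | cons b v' =>
      simp only [List.cons_append, List.cons.injEq] at h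
      obtain ⟨rfl, h⟩ := h
      obtain ⟨rfl, rfl, rfl⟩ :=
        ih (fun x hx => hv x (.tail _ hx)) (fun x hx => hv' x (.tail _ hx)) h
      exact ⟨rfl, rfl, rfl⟩

namespace Language

variable {α : Type*} {L : Language α} {P : α → Prop} {a b s v : List α} {y z : α}

theorem mem_kstar_of_mem (h : a ∈ L) : a ∈ L∗ :=
  le_kstar (a := L) h

theorem append_mem_kstar (ha : a ∈ L∗) (hb : b ∈ L∗) : a ++ b ∈ L∗ :=
  kstar_mul_kstar L ▸ append_mem_mul ha hb

/-- The words of `L` are delimited by the `P`-letters, so `L` is a prefix code and a word of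
`L∗` factors into words of `L` by cutting after each `P`-letter. -/
def IsTerminatedBy (L : Language α) (P : α → Prop) : Prop :=
  ∀ u ∈ L, ∃ v y, u = v ++ [y] ∧ P y ∧ ∀ x ∈ v, ¬P x

namespace IsTerminatedBy

theorem append_cons_mem_kstar_iff (hL : L.IsTerminatedBy P) (hv : ∀ x ∈ v, ¬P x) (hy : P y) :
    v ++ y :: s ∈ L∗ ↔ v ++ [y] ∈ L ∧ s ∈ L∗ := by
  constructor
  · rintro ⟨_ | ⟨u, us⟩, hw, hus⟩
    · simp at hw
    · obtain ⟨v', y', rfl, hy', hv'⟩ := hL u (hus u List.mem_cons_self)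
      simp only [List.flatten_cons, List.append_assoc, List.singleton_append] at hw
      obtain ⟨rfl, rfl, rfl⟩ := List.append_cons_inj_of_forall_not hv hv' hy hy' hw
      exact ⟨hus _ List.mem_cons_self, us, rfl,
        fun u hu => hus u (List.mem_cons_of_mem _ hu)⟩
  · rintro ⟨hu, us, rfl, hus⟩
    simpa using join_mem_kstar (L := (v ++ [y]) :: us) (by simpa [hu] using hus)

theorem kstar_split_of_forall_not (hL : L.IsTerminatedBy P) (hz : P z) :
    ∀ {c : List α}, (∀ x ∈ c, ¬P x) → c ++ a ++ z :: b ∈ L∗ → c ++ a ++ [z] ∈ L∗ ∧ b ∈ L∗ := by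
  induction a with
  | nil =>
    intro c hc h
    simp only [List.append_nil] at h ⊢
    exact (hL.append_cons_mem_kstar_iff hc hz).1 h |>.imp_left mem_kstar_of_mem
  | cons x a ih =>
    intro c hc h
    by_cases hx : P x
    · rw [List.append_assoc, List.cons_append, hL.append_cons_mem_kstar_iff hc hx] at h
      obtain ⟨h₁, h₂⟩ := ih (c := []) (by simp) (by simpa using h.2)
      exact ⟨by simpa using append_mem_kstar (mem_kstar_of_mem h.1) h₁, h₂⟩
    · have hcx : ∀ t ∈ c ++ [x], ¬P t := by simpa [or_imp, forall_and, hx] using hc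
      simpa using ih hcx (by simpa using h)

theorem kstar_split (hL : L.IsTerminatedBy P) (hz : P z) (h : a ++ z :: b ∈ L∗) :
    a ++ [z] ∈ L∗ ∧ b ∈ L∗ := by
  simpa using hL.kstar_split_of_forall_not hz (c := []) (by simp) (by simpa using h)

end IsTerminatedBy

end Language

/-- `block n i` as a `Language`, so that Mathlib's Kleene star applies to it. -/
def blockLanguage (n i : ℕ) : Language ℕ := block n i

theorem blockLanguage_isTerminatedBy (n i : ℕ) : (blockLanguage n i).IsTerminatedBy (i < ·) := by
  rintro _ ⟨p, q, y, rfl, hp, hq, hy, -⟩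
  refine ⟨p ++ [i] ++ q, y, rfl, hy, fun x hx => ?_⟩
  simp only [List.mem_append, List.mem_singleton] at hx
  rcases hx with (hx | rfl) | hx
  exacts [(hp x hx).2.not_gt, lt_irrefl x, (hq x hx).2.not_gt]

theorem append_singleton_mem_blockLanguage_iff {n i y : ℕ} {v : List ℕ} :
    v ++ [y] ∈ blockLanguage n i ↔
      (∃ p q, v = p ++ [i] ++ q ∧ overLow i p ∧ overLow i q) ∧ i < y ∧ y ≤ n := by
  constructor
  · rintro ⟨p, q, y', h, hp, hq, hy, hyn⟩
    obtain ⟨rfl, rfl⟩ := List.append_singleton_inj.1 h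
    exact ⟨⟨p, q, rfl, hp, hq⟩, hy, hyn⟩
  · rintro ⟨⟨p, q, rfl, hp, hq⟩, hy, hyn⟩
    exact ⟨p, q, y, rfl, hp, hq, hy, hyn⟩

theorem mem_Llang_of_ne {n i : ℕ} {w : List ℕ} (h : i ≠ n) :
    w ∈ Llang n i ↔ w ∈ (blockLanguage n i)∗ := by
  rw [Language.mem_kstar, Llang, if_neg h]
  simp only [Set.mem_ofPred_eq, eq_comm]
  rfl

theorem overLow.mono {i j : ℕ} {w : List ℕ} (hw : overLow i w) (hij : i ≤ j) : overLow j w :=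
  fun x hx => ⟨(hw x hx).1, (hw x hx).2.trans_le hij⟩

theorem uword_succ (k : ℕ) : uword (k + 1) = uword k ++ [k + 1] ++ uword k := by
  cases k <;> rfl

theorem overLow_uword (k : ℕ) : overLow (k + 1) (uword k) := by
  induction k with
  | zero => simp [overLow, uword]
  | succ k ih =>
    rw [uword_succ]
    intro x hx
    simp only [List.mem_append, List.mem_singleton] at hx
    rcases hx with (hx | rfl) | hx
    exacts [(ih.mono (by omega)) x hx, ⟨by omega, by omega⟩, (ih.mono (by omega)) x hx]

theorem uword_append_mem_kstar {n i k y : ℕ} (hi : 1 ≤ i) (hik : i ≤ k) (hky : k < y)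
    (hyn : y ≤ n) : uword k ++ [y] ∈ (blockLanguage n i)∗ := by
  induction k, hik using Nat.le_induction generalizing y with
  | base =>
    obtain ⟨j, rfl⟩ : ∃ j, i = j + 1 := ⟨i - 1, by omega⟩
    rw [uword_succ]
    exact Language.mem_kstar_of_mem <| append_singleton_mem_blockLanguage_iff.2
      ⟨⟨_, _, rfl, overLow_uword j, overLow_uword j⟩, hky, hyn⟩
  | succ k hik ih =>
    rw [uword_succ]
    simpa using Language.append_mem_kstar (ih (lt_add_one k) (by omega)) (ih (by omega) hyn)

theorem eq_uword_of_forall_mem_kstar {n k y : ℕ} {v : List ℕ} (hv : overLow (k + 1) v)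
    (hky : k < y) (h : ∀ i, 1 ≤ i → i ≤ k → v ++ [y] ∈ (blockLanguage n i)∗) :
    v = uword k := by
  induction k generalizing v y with
  | zero => exact List.eq_nil_iff_forall_not_mem.2 fun x hx => by have := hv x hx; omega
  | succ k ih =>
    have hv' : ∀ x ∈ v, ¬k + 1 < x := fun x hx => by have := (hv x hx).2; omega
    obtain ⟨⟨p, q, rfl, hp, hq⟩, -⟩ := append_singleton_mem_blockLanguage_iff.1 <|
      ((blockLanguage_isTerminatedBy n (k + 1)).append_cons_mem_kstar_iff hv' hky).1
        (h (k + 1) (by omega) le_rfl) |>.1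
    have hsplit : ∀ i, 1 ≤ i → i ≤ k → p ++ [k + 1] ∈ (blockLanguage n i)∗ ∧
        q ++ [y] ∈ (blockLanguage n i)∗ := fun i hi hik =>
      (blockLanguage_isTerminatedBy n i).kstar_split (by omega) (by simpa using h i hi (by omega))
    rw [ih hp (lt_add_one k) fun i hi hik => (hsplit i hi hik).1,
      ih hq (by omega) fun i hi hik => (hsplit i hi hik).2, uword_succ]

theorem inter_Llang_eq_singleton (n : ℕ) (hn : 2 ≤ n) :
    {w : List ℕ | ∀ i, 1 ≤ i → i ≤ n → w ∈ Llang n i} = {ufinal n} := by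
  obtain ⟨m, rfl⟩ : ∃ m, n = m + 1 := ⟨n - 1, by omega⟩
  ext w
  simp only [Set.mem_ofPred_eq, Set.mem_singleton_iff]
  constructor
  · intro h
    obtain ⟨p, q, rfl, hp, hq⟩ := by simpa [Llang] using h (m + 1) (by omega) le_rfl
    have hsplit : ∀ i, 1 ≤ i → i ≤ m → p ++ [m + 1] ∈ (blockLanguage (m + 1) i)∗ ∧
        q ++ [m + 1] ∈ (blockLanguage (m + 1) i)∗ := fun i hi him =>
      (blockLanguage_isTerminatedBy _ i).kstar_split (by omega)
        (by simpa using (mem_Llang_of_ne (by omega)).1 (h i hi (by omega)))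
    rw [eq_uword_of_forall_mem_kstar hp (lt_add_one m) fun i hi him => (hsplit i hi him).1,
      eq_uword_of_forall_mem_kstar hq (lt_add_one m) fun i hi him => (hsplit i hi him).2]
    simp [ufinal]
  · rintro rfl i hi hin
    rw [ufinal, Nat.add_sub_cancel]
    rcases hin.eq_or_lt with rfl | hlt
    · simpa [Llang] using ⟨_, _, rfl, overLow_uword m, overLow_uword m⟩
    · have hu := uword_append_mem_kstar hi (Nat.le_of_lt_succ hlt) (lt_add_one m) le_rfl
      rw [mem_Llang_of_ne hlt.ne]
      simpa using Language.append_mem_kstar hu hu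
end

section
/- Define the width of RTEs by w((e,v)) = 1, w(f+g) = w(f·g) = max(w(f), w(g)), w(f*) = w(f), w(f⊙g) = w(f) + w(g), and parser sizes by ‖P_{(e,v)}‖ ≤ |(e,v)|, ‖P_{f+g}‖ = ‖P_f‖+‖P_g‖, ‖P_{f·g}‖ = 1+‖P_f‖+‖P_g‖, ‖P_{f*}‖ = 1+‖P_f‖, ‖P_{f⊙g}‖ = 2·‖P_f‖·‖P_g‖ + 2. Then for every RTE h in this fragment, ‖P_h‖ ≤ |h|^{w(h)}, where sizes satisfy |f+g| = |f·g| = |f⊙g| = 1+|f|+|g|, |f*| = 1+|f|, and each base case has ‖P_h‖ ≤ |h| and |h| ≥ 3. -/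
/-- Abstract syntax trees of RTEs in the fragment base / sum / Cauchy product /
Hadamard product / Kleene star; a base expression carries its size `s ≥ 3` and
its parser size `p ≤ s`. -/
inductive RTE1 where
  | base (s p : ℕ) (hp : p ≤ s) (hs : 3 ≤ s)
  | sum (f g : RTE1)
  | prod (f g : RTE1)
  | had (f g : RTE1)
  | star (f : RTE1)

namespace RTE1

/-- Size: `|f+g| = |f·g| = |f⊙g| = 1 + |f| + |g|`, `|f*| = 1 + |f|`. -/
def size : RTE1 → ℕ
  | base s _ _ _ => s
  | sum f g => 1 + size f + size g
  | prod f g => 1 + size f + size g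
  | had f g => 1 + size f + size g
  | star f => 1 + size f

/-- Width: base expressions have width 1, `w(f⊙g) = w(f) + w(g)`. -/
def width : RTE1 → ℕ
  | base _ _ _ _ => 1
  | sum f g => max (width f) (width g)
  | prod f g => max (width f) (width g)
  | had f g => width f + width g
  | star f => width f

/-- Parser size: `‖P_{f⊙g}‖ = 2·‖P_f‖·‖P_g‖ + 2`. -/
def psize : RTE1 → ℕ
  | base _ p _ _ => p
  | sum f g => psize f + psize g
  | prod f g => 1 + psize f + psize g
  | had f g => 2 * psize f * psize g + 2
  | star f => 1 + psize f

lemma three_le_size (h : RTE1) : 3 ≤ size h := by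
  induction h with
  | base s p hp hs => exact hs
  | sum f g hf hg => simp only [size]; omega
  | prod f g hf hg => simp only [size]; omega
  | had f g hf hg => simp only [size]; omega
  | star f hf => simp only [size]; omega

lemma one_le_width (h : RTE1) : 1 ≤ width h := by
  induction h with
  | base s p hp hs => exact le_refl 1
  | sum f g hf hg => simp only [width]; omega
  | prod f g hf hg => simp only [width]; omega
  | had f g hf hg => simp only [width]; omega
  | star f hf => simpa [width] using hf

lemma four_mul_le_sq (a b : ℕ) : 4 * a * b ≤ (a + b) ^ 2 := by
  rcases Nat.le_total a b with h | h
  · obtain ⟨k, rfl⟩ := Nat.exists_eq_add_of_le h; nlinarith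
  · obtain ⟨k, rfl⟩ := Nat.exists_eq_add_of_le h; nlinarith

end RTE1

theorem parser_size_le_size_pow_width (h : RTE1) :
    RTE1.psize h ≤ RTE1.size h ^ RTE1.width h := by
  induction h with
  | base s p hp hs => simpa [RTE1.psize, RTE1.size, RTE1.width] using hp
  | sum f g hf hg =>
    simp only [RTE1.psize, RTE1.size, RTE1.width]
    have h1 : RTE1.psize f + RTE1.psize g ≤
        RTE1.size f ^ max (RTE1.width f) (RTE1.width g) +
        RTE1.size g ^ max (RTE1.width f) (RTE1.width g) := by
      gcongr
      · exact hf.trans (Nat.pow_le_pow_right (by have := f.three_le_size; omega)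
          (le_max_left _ _))
      · exact hg.trans (Nat.pow_le_pow_right (by have := g.three_le_size; omega)
          (le_max_right _ _))
    refine h1.trans ?_
    refine (pow_add_pow_le ?_ ?_ ?_).trans ?_
    · exact Nat.zero_le _
    · exact Nat.zero_le _
    · have := f.one_le_width; omega
    · exact Nat.pow_le_pow_left (by omega) _
  | prod f g hf hg =>
    simp only [RTE1.psize, RTE1.size, RTE1.width]
    set W := max (RTE1.width f) (RTE1.width g) with hW
    have hWpos : W ≠ 0 := by have := f.one_le_width; omega
    have h1 : RTE1.psize f + RTE1.psize g ≤ (RTE1.size f + RTE1.size g) ^ W := by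
      calc RTE1.psize f + RTE1.psize g ≤ RTE1.size f ^ W + RTE1.size g ^ W := by
            gcongr
            · exact hf.trans (Nat.pow_le_pow_right (by have := f.three_le_size; omega)
                (le_max_left _ _))
            · exact hg.trans (Nat.pow_le_pow_right (by have := g.three_le_size; omega)
                (le_max_right _ _))
        _ ≤ (RTE1.size f + RTE1.size g) ^ W :=
            pow_add_pow_le (Nat.zero_le _) (Nat.zero_le _) hWpos
    calc 1 + RTE1.psize f + RTE1.psize g
        ≤ 1 ^ W + (RTE1.size f + RTE1.size g) ^ W := by
          rw [one_pow]; omega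
      _ ≤ (1 + (RTE1.size f + RTE1.size g)) ^ W :=
          pow_add_pow_le (Nat.zero_le _) (Nat.zero_le _) hWpos
      _ = (1 + RTE1.size f + RTE1.size g) ^ W := by ring_nf
  | had f g hf hg =>
    simp only [RTE1.psize, RTE1.size, RTE1.width]
    obtain ⟨a, ha⟩ : ∃ a, RTE1.width f = a + 1 := by
      have := f.one_le_width; exact ⟨RTE1.width f - 1, by omega⟩
    obtain ⟨b, hb⟩ : ∃ b, RTE1.width g = b + 1 := by
      have := g.one_le_width; exact ⟨RTE1.width g - 1, by omega⟩
    set sf := RTE1.size f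
    set sg := RTE1.size g
    set S := 1 + sf + sg with hS
    have hsf : 3 ≤ sf := f.three_le_size
    have hsg : 3 ≤ sg := g.three_le_size
    have hA : RTE1.psize f ≤ sf ^ (a + 1) := ha ▸ hf
    have hB : RTE1.psize g ≤ sg ^ (b + 1) := hb ▸ hg
    rw [ha, hb]
    have key : 4 * (sf ^ (a + 1) * sg ^ (b + 1)) ≤ S ^ (a + 1 + (b + 1)) := by
      have h2 : 4 * sf * sg ≤ S ^ 2 := by
        calc 4 * sf * sg ≤ (sf + sg) ^ 2 := RTE1.four_mul_le_sq sf sg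
          _ ≤ S ^ 2 := Nat.pow_le_pow_left (by omega) 2
      calc 4 * (sf ^ (a + 1) * sg ^ (b + 1))
          = (4 * sf * sg) * (sf ^ a * sg ^ b) := by ring
        _ ≤ S ^ 2 * (S ^ a * S ^ b) :=
            Nat.mul_le_mul h2 (Nat.mul_le_mul (Nat.pow_le_pow_left (by omega) a)
              (Nat.pow_le_pow_left (by omega) b))
        _ = S ^ (a + 1 + (b + 1)) := by ring
    have hAB : 1 ≤ sf ^ (a + 1) * sg ^ (b + 1) :=
      Nat.one_le_iff_ne_zero.mpr (by positivity)
    calc 2 * RTE1.psize f * RTE1.psize g + 2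
        ≤ 2 * (sf ^ (a + 1) * sg ^ (b + 1)) + 2 * (sf ^ (a + 1) * sg ^ (b + 1)) := by
          have : 2 * RTE1.psize f * RTE1.psize g ≤ 2 * (sf ^ (a+1) * sg ^ (b+1)) := by
            calc 2 * RTE1.psize f * RTE1.psize g = 2 * (RTE1.psize f * RTE1.psize g) := by ring
              _ ≤ 2 * (sf ^ (a+1) * sg ^ (b+1)) := by gcongr
          omega
      _ = 4 * (sf ^ (a + 1) * sg ^ (b + 1)) := by ring
      _ ≤ S ^ (a + 1 + (b + 1)) := key
  | star f hf =>
    simp only [RTE1.psize, RTE1.size, RTE1.width]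
    have hWpos : RTE1.width f ≠ 0 := by have := f.one_le_width; omega
    calc 1 + RTE1.psize f ≤ 1 ^ RTE1.width f + RTE1.size f ^ RTE1.width f := by
          rw [one_pow]; omega
      _ ≤ (1 + RTE1.size f) ^ RTE1.width f :=
          pow_add_pow_le (Nat.zero_le _) (Nat.zero_le _) hWpos
end
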